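/- Let B ∈ ℕ and let M be an ∃B-bounded MSC over P and Σ. Then the reflexive closure ⪯_B of ≺_B contains the partial order ≤_B (in particular it contains the happened-before order ≤), and ⪯_B is a B-bounded linearization of M. -/

import Mathlib

set_option maxHeartbeats 1000000

/-! ## Message sequence charts -/

/-- A message sequence chart (MSC) over processes `P` and labels `Lab`.
Events are natural numbers; `E` is the finite nonempty set of events. -/
structure MSC (P : Type) (Lab : Type) where
  /-- the finite set of events -/
  E : Finset ℕ
  nonemptyE : E.Nonempty
  /-- process edges `→` (direct successor on a process) -/
  proc : ℕ → ℕ → Prop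
  /-- message edges `◁` -/
  msg : ℕ → ℕ → Prop
  /-- location (process) of each event -/
  loc : ℕ → P
  /-- label of each event -/
  lab : ℕ → Lab
  proc_mem : ∀ e f, proc e f → e ∈ E ∧ f ∈ E
  msg_mem : ∀ e f, msg e f → e ∈ E ∧ f ∈ E
  proc_loc : ∀ e f, proc e f → loc e = loc f
  msg_loc : ∀ e f, msg e f → loc e ≠ loc f
  /-- on each process, any two events are comparable w.r.t. `→⁺` -/
  proc_total : ∀ e f, e ∈ E → f ∈ E → loc e = loc f →
    e = f ∨ Relation.TransGen proc e f ∨ Relation.TransGen proc f e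
  /-- `→` is the direct-successor (covering) relation of the order `→⁺` -/
  proc_cover : ∀ e f, proc e f →
    ¬ ∃ g, Relation.TransGen proc e g ∧ Relation.TransGen proc g f
  /-- every event belongs to at most one message edge -/
  msg_once : ∀ e f e' f', msg e f → msg e' f' →
    (e = e' ∨ e = f' ∨ f = e' ∨ f = f') → e = e' ∧ f = f'
  /-- FIFO condition -/
  fifo : ∀ e f e' f', msg e f → msg e' f' → loc e = loc e' → loc f = loc f' →
    (Relation.ReflTransGen proc e e' ↔ Relation.ReflTransGen proc f f')
  /-- `→ ∪ ◁` is acyclic -/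
  acyclic : ∀ e, ¬ Relation.TransGen (fun a b => proc a b ∨ msg a b) e e

namespace MSC

variable {P Lab : Type}

/-- `≤proc`, the reflexive transitive closure of `→`. -/
def procLe (M : MSC P Lab) : ℕ → ℕ → Prop := Relation.ReflTransGen M.proc

/-- `<proc`, the transitive closure of `→`. -/
def procLt (M : MSC P Lab) : ℕ → ℕ → Prop := Relation.TransGen M.proc

/-- the happened-before relation `≤ = (→ ∪ ◁)*`. -/
def hb (M : MSC P Lab) : ℕ → ℕ → Prop :=
  Relation.ReflTransGen (fun a b => M.proc a b ∨ M.msg a b)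

/-- Relabelling an MSC (same events and edges, new labelling). -/
def relabel {Γ : Type} (M : MSC P Lab) (γ : ℕ → Γ) : MSC P Γ where
  E := M.E
  nonemptyE := M.nonemptyE
  proc := M.proc
  msg := M.msg
  loc := M.loc
  lab := γ
  proc_mem := M.proc_mem
  msg_mem := M.msg_mem
  proc_loc := M.proc_loc
  msg_loc := M.msg_loc
  proc_total := M.proc_total
  proc_cover := M.proc_cover
  msg_once := M.msg_once
  fifo := M.fifo
  acyclic := M.acyclic

end MSC

/-! ## Star-free PDL -/

mutual
/-- Event formulas of star-free PDL. -/
inductive EF (P Lab : Type) : Type where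
  | proc : P → EF P Lab
  | lab : Lab → EF P Lab
  | or : EF P Lab → EF P Lab → EF P Lab
  | not : EF P Lab → EF P Lab
  | dia : PF P Lab → EF P Lab → EF P Lab
  | loop : PF P Lab → EF P Lab
/-- Path formulas of star-free PDL. -/
inductive PF (P Lab : Type) : Type where
  | next : PF P Lab
  | prev : PF P Lab
  | msg : P → P → PF P Lab
  | msgInv : P → P → PF P Lab
  | nextG : EF P Lab → PF P Lab
  | prevG : EF P Lab → PF P Lab
  | jump : P → P → PF P Lab
  | test : EF P Lab → PF P Lab
  | comp : PF P Lab → PF P Lab → PF P Lab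
  | union : PF P Lab → PF P Lab → PF P Lab
  | inter : PF P Lab → PF P Lab → PF P Lab
  | compl : PF P Lab → PF P Lab
end

mutual
/-- Satisfaction of event formulas at an event. -/
def EF.sat {P Lab : Type} (M : MSC P Lab) : EF P Lab → ℕ → Prop
  | .proc p, e => e ∈ M.E ∧ M.loc e = p
  | .lab a, e => e ∈ M.E ∧ M.lab e = a
  | .or φ ψ, e => EF.sat M φ e ∨ EF.sat M ψ e
  | .not φ, e => e ∈ M.E ∧ ¬ EF.sat M φ e
  | .dia π φ, e => ∃ f, PF.sem M π e f ∧ EF.sat M φ f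
  | .loop π, e => PF.sem M π e e
/-- Semantics of path formulas as binary relations on events. -/
def PF.sem {P Lab : Type} (M : MSC P Lab) : PF P Lab → ℕ → ℕ → Prop
  | .next, e, f => M.proc e f
  | .prev, e, f => M.proc f e
  | .msg p q, e, f => M.msg e f ∧ M.loc e = p ∧ M.loc f = q
  | .msgInv p q, e, f => M.msg f e ∧ M.loc f = p ∧ M.loc e = q
  | .nextG φ, e, f => M.procLt e f ∧ ∀ g, M.procLt e g → M.procLt g f → EF.sat M φ g
  | .prevG φ, e, f => M.procLt f e ∧ ∀ g, M.procLt f g → M.procLt g e → EF.sat M φ g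
  | .jump p r, e, f => e ∈ M.E ∧ f ∈ M.E ∧ M.loc e = p ∧ M.loc f = r
  | .test φ, e, f => e = f ∧ EF.sat M φ e
  | .comp π₁ π₂, e, f => ∃ g, PF.sem M π₁ e g ∧ PF.sem M π₂ g f
  | .union π₁ π₂, e, f => PF.sem M π₁ e f ∨ PF.sem M π₂ e f
  | .inter π₁ π₂, e, f => PF.sem M π₁ e f ∧ PF.sem M π₂ e f
  | .compl π, e, f => e ∈ M.E ∧ f ∈ M.E ∧ ¬ PF.sem M π e f
end

/-- Sentences of star-free PDL. -/
inductive PDLS (P Lab : Type) : Type where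
  | ex : EF P Lab → PDLS P Lab
  | or : PDLS P Lab → PDLS P Lab → PDLS P Lab
  | not : PDLS P Lab → PDLS P Lab

/-- Satisfaction of PDL sentences. -/
def PDLS.sat {P Lab : Type} (M : MSC P Lab) : PDLS P Lab → Prop
  | .ex φ => ∃ e ∈ M.E, EF.sat M φ e
  | .or ξ ζ => PDLS.sat M ξ ∨ PDLS.sat M ζ
  | .not ξ => ¬ PDLS.sat M ξ

/-- The four optional operators of star-free PDL. -/
inductive PDLOp : Type where
  | loop | union | inter | compl
deriving DecidableEq

mutual
/-- `EF.inFrag R φ` : the event formula `φ` belongs to the fragment `PDLsf[R]`. -/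
def EF.inFrag {P Lab : Type} (R : Set PDLOp) : EF P Lab → Prop
  | .proc _ => True
  | .lab _ => True
  | .or φ ψ => EF.inFrag R φ ∧ EF.inFrag R ψ
  | .not φ => EF.inFrag R φ
  | .dia π φ => PF.inFrag R π ∧ EF.inFrag R φ
  | .loop π => PDLOp.loop ∈ R ∧ PF.inFrag R π
/-- `PF.inFrag R π` : the path formula `π` belongs to the fragment `PDLsf[R]`. -/
def PF.inFrag {P Lab : Type} (R : Set PDLOp) : PF P Lab → Prop
  | .next => True
  | .prev => True
  | .msg _ _ => True
  | .msgInv _ _ => True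
  | .nextG φ => EF.inFrag R φ
  | .prevG φ => EF.inFrag R φ
  | .jump _ _ => True
  | .test φ => EF.inFrag R φ
  | .comp π₁ π₂ => PF.inFrag R π₁ ∧ PF.inFrag R π₂
  | .union π₁ π₂ => PDLOp.union ∈ R ∧ PF.inFrag R π₁ ∧ PF.inFrag R π₂
  | .inter π₁ π₂ => PDLOp.inter ∈ R ∧ PF.inFrag R π₁ ∧ PF.inFrag R π₂
  | .compl π => PDLOp.compl ∈ R ∧ PF.inFrag R π
end

/-- `PDLS.inFrag R ξ` : the sentence `ξ` belongs to the fragment `PDLsf[R]`. -/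
def PDLS.inFrag {P Lab : Type} (R : Set PDLOp) : PDLS P Lab → Prop
  | .ex φ => EF.inFrag R φ
  | .or ξ ζ => PDLS.inFrag R ξ ∧ PDLS.inFrag R ζ
  | .not ξ => PDLS.inFrag R ξ

/-- Conjunction of event formulas (derived operator). -/
def EF.and {P Lab : Type} (φ ψ : EF P Lab) : EF P Lab :=
  .not (.or (.not φ) (.not ψ))

/-- `isMinOf M π e m` : `m` is the `≤proc`-least element of `⟦π⟧_M(e)`
(in particular `⟦π⟧_M(e)` is nonempty). -/
def isMinOf {P Lab : Type} (M : MSC P Lab) (π : PF P Lab) (e m : ℕ) : Prop :=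
  PF.sem M π e m ∧ ∀ f, PF.sem M π e f → M.procLe m f

/-- `isMaxOf M π e m` : `m` is the `≤proc`-greatest element of `⟦π⟧_M(e)`
(in particular `⟦π⟧_M(e)` is nonempty). -/
def isMaxOf {P Lab : Type} (M : MSC P Lab) (π : PF P Lab) (e m : ℕ) : Prop :=
  PF.sem M π e m ∧ ∀ f, PF.sem M π e f → M.procLe f m

/-! ## MSO/FO logic over MSCs -/

/-- Formulas of MSO over MSCs: first-order kernel with atoms `p(x)`, `a(x)`,
`x = y`, `x → y`, `x ◁ y`, `x ≤ y` and additionally `x ∈ X_k` (monadic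
second-order variables, used for the EMSO prefix). -/
inductive FOS (P Lab : Type) : Type where
  | pred : P → ℕ → FOS P Lab
  | lab : Lab → ℕ → FOS P Lab
  | eq : ℕ → ℕ → FOS P Lab
  | edge : ℕ → ℕ → FOS P Lab
  | medge : ℕ → ℕ → FOS P Lab
  | le : ℕ → ℕ → FOS P Lab
  | inSet : ℕ → ℕ → FOS P Lab
  | or : FOS P Lab → FOS P Lab → FOS P Lab
  | not : FOS P Lab → FOS P Lab
  | ex : ℕ → FOS P Lab → FOS P Lab

/-- Satisfaction, with a first-order valuation `ν` and a second-order valuation `σ`.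
First-order quantification ranges over the events of the MSC. -/
def FOS.sat {P Lab : Type} (M : MSC P Lab) : FOS P Lab → (ℕ → ℕ) → (ℕ → Set ℕ) → Prop
  | .pred p x, ν, _ => M.loc (ν x) = p
  | .lab a x, ν, _ => M.lab (ν x) = a
  | .eq x y, ν, _ => ν x = ν y
  | .edge x y, ν, _ => M.proc (ν x) (ν y)
  | .medge x y, ν, _ => M.msg (ν x) (ν y)
  | .le x y, ν, _ => M.hb (ν x) (ν y)
  | .inSet x k, ν, σ => ν x ∈ σ k
  | .or Φ Ψ, ν, σ => FOS.sat M Φ ν σ ∨ FOS.sat M Ψ ν σ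
  | .not Φ, ν, σ => ¬ FOS.sat M Φ ν σ
  | .ex x Φ, ν, σ => ∃ e ∈ M.E, FOS.sat M Φ (Function.update ν x e) σ

/-- Free first-order variables. -/
def FOS.free {P Lab : Type} : FOS P Lab → Finset ℕ
  | .pred _ x => {x}
  | .lab _ x => {x}
  | .eq x y => {x, y}
  | .edge x y => {x, y}
  | .medge x y => {x, y}
  | .le x y => {x, y}
  | .inSet x _ => {x}
  | .or Φ Ψ => FOS.free Φ ∪ FOS.free Ψ
  | .not Φ => FOS.free Φ
  | .ex x Φ => (FOS.free Φ).erase x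

/-- All first-order variables occurring (free or bound). -/
def FOS.vars {P Lab : Type} : FOS P Lab → Finset ℕ
  | .pred _ x => {x}
  | .lab _ x => {x}
  | .eq x y => {x, y}
  | .edge x y => {x, y}
  | .medge x y => {x, y}
  | .le x y => {x, y}
  | .inSet x _ => {x}
  | .or Φ Ψ => FOS.vars Φ ∪ FOS.vars Ψ
  | .not Φ => FOS.vars Φ
  | .ex x Φ => insert x (FOS.vars Φ)

/-- A formula is first-order (`FO[→,◁,≤]`) iff it contains no set atoms. -/
def FOS.noSets {P Lab : Type} : FOS P Lab → Prop
  | .pred _ _ => True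
  | .lab _ _ => True
  | .eq _ _ => True
  | .edge _ _ => True
  | .medge _ _ => True
  | .le _ _ => True
  | .inSet _ _ => False
  | .or Φ Ψ => FOS.noSets Φ ∧ FOS.noSets Ψ
  | .not Φ => FOS.noSets Φ
  | .ex _ Φ => FOS.noSets Φ

/-! ## Communicating finite-state machines -/

/-- Actions of a process: internal `⟨a⟩`, send `!(a,m,q)`, receive `?(a,m,q)`. -/
inductive CAct (P Lab Msg : Type) : Type where
  | int : Lab → CAct P Lab Msg
  | snd : Lab → Msg → P → CAct P Lab Msg
  | rcv : Lab → Msg → P → CAct P Lab Msg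

/-- The label performed by an action. -/
def CAct.label {P Lab Msg : Type} : CAct P Lab Msg → Lab
  | .int a => a
  | .snd a _ _ => a
  | .rcv a _ _ => a

/-- A communicating finite-state machine over `P` and `Lab`. -/
structure CFM (P Lab : Type) where
  /-- states -/
  S : Type
  finS : Fintype S
  /-- messages -/
  Msg : Type
  finMsg : Fintype Msg
  /-- initial state of each process -/
  ι : P → S
  /-- transition relation of each process -/
  Δ : P → S → CAct P Lab Msg → S → Prop
  Δ_snd : ∀ p s a m q s', Δ p s (.snd a m q) s' → q ≠ p
  Δ_rcv : ∀ p s a m q s', Δ p s (.rcv a m q) s' → q ≠ p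
  /-- acceptance condition -/
  Acc : (P → S) → Prop

/-- Existence of an accepting run of a CFM on an MSC. -/
def CFM.Accepts {P Lab : Type} (A : CFM P Lab) (M : MSC P Lab) : Prop :=
  ∃ (src tgt : ℕ → A.S) (act : ℕ → CAct P Lab A.Msg),
    (∀ e ∈ M.E, A.Δ (M.loc e) (src e) (act e) (tgt e)) ∧
    (∀ e ∈ M.E, (act e).label = M.lab e) ∧
    (∀ e ∈ M.E, (¬ ∃ f, M.proc f e) → src e = A.ι (M.loc e)) ∧
    (∀ e f, M.proc e f → tgt e = src f) ∧
    (∀ e ∈ M.E, (¬ ∃ f, M.msg e f) → (¬ ∃ f, M.msg f e) → ∃ a, act e = .int a) ∧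
    (∀ e f, M.msg e f →
      ∃ a a' m, act e = .snd a m (M.loc f) ∧ act f = .rcv a' m (M.loc e)) ∧
    (∃ fin : P → A.S,
      (∀ p, (∀ e ∈ M.E, M.loc e ≠ p) → fin p = A.ι p) ∧
      (∀ e ∈ M.E, (¬ ∃ f, M.proc e f) → fin (M.loc e) = tgt e) ∧
      A.Acc fin)

/-- The language of a CFM. -/
def CFM.lang {P Lab : Type} (A : CFM P Lab) : Set (MSC P Lab) := {M | A.Accepts M}

/-! ## Letter-to-letter MSC transducers -/

/-- The relation accepted by a letter-to-letter MSC transducer from `Lab` to `Γ`,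
i.e., a CFM over `P` and `Lab × Γ`. -/
def Ltrans {P Lab Γ : Type} (A : CFM P (Lab × Γ)) (M : MSC P Lab) (N : MSC P Γ) : Prop :=
  ∃ γ : ℕ → Γ, N = M.relabel γ ∧ A.Accepts (M.relabel fun e => (M.lab e, γ e))

/-- `M_φ` : the MSC over `Bool` obtained from `M` by labelling each event with
the truth value of the event formula `φ`. -/
noncomputable def MSC.evalEF {P Lab : Type} (M : MSC P Lab) (φ : EF P Lab) : MSC P Bool :=
  M.relabel fun e => @ite Bool (EF.sat M φ e) (Classical.propDecidable _) true false

/-! ## Boolean combinations -/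

/-- Boolean combinations over atoms of type `α`. -/
inductive BC (α : Type) : Type where
  | atom : α → BC α
  | or : BC α → BC α → BC α
  | not : BC α → BC α

/-- Evaluation of a boolean combination given truth values of the atoms. -/
def BC.eval {α : Type} (v : α → Prop) : BC α → Prop
  | .atom a => v a
  | .or b c => BC.eval v b ∨ BC.eval v c
  | .not b => ¬ BC.eval v b

/-- The atoms occurring in a boolean combination. -/
def BC.atoms {α : Type} : BC α → Set α
  | .atom a => {a}
  | .or b c => BC.atoms b ∪ BC.atoms c
  | .not b => BC.atoms b

/-! ## Bounded MSCs -/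

/-- `r` is a linearization of `M`: a total order on the events containing
the happened-before relation. -/
def IsLinearization {P Lab : Type} (M : MSC P Lab) (r : ℕ → ℕ → Prop) : Prop :=
  (∀ e ∈ M.E, r e e) ∧
  (∀ e ∈ M.E, ∀ f ∈ M.E, r e f → r f e → e = f) ∧
  (∀ e ∈ M.E, ∀ f ∈ M.E, ∀ g ∈ M.E, r e f → r f g → r e g) ∧
  (∀ e ∈ M.E, ∀ f ∈ M.E, r e f ∨ r f e) ∧
  (∀ e ∈ M.E, ∀ f ∈ M.E, M.hb e f → r e f)

/-- `r` is a `B`-bounded linearization of `M`: at any point, each channel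
contains at most `B` pending messages. -/
def IsBBoundedLin {P Lab : Type} (M : MSC P Lab) (r : ℕ → ℕ → Prop) (B : ℕ) : Prop :=
  IsLinearization M r ∧
  ∀ g ∈ M.E, ∀ p q : P, p ≠ q →
    Set.ncard {ef : ℕ × ℕ | M.msg ef.1 ef.2 ∧ M.loc ef.1 = p ∧ M.loc ef.2 = q ∧
      r ef.1 g ∧ ¬ r ef.2 g} ≤ B

/-- `M` is `∃B`-bounded: some linearization of `M` is `B`-bounded. -/
def ExistsBBounded {P Lab : Type} (M : MSC P Lab) (B : ℕ) : Prop :=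
  ∃ r : ℕ → ℕ → Prop, IsBBoundedLin M r B

/-- `g` is a send event on channel `(p,q)`. -/
def isSendOn {P Lab : Type} (M : MSC P Lab) (p q : P) (g : ℕ) : Prop :=
  M.loc g = p ∧ ∃ h, M.msg g h ∧ M.loc h = q

/-- `revB M B f g` : `f` is a receive event with matching send `e` on some
channel `(p,q)`, and `g` is the `B`-th send on channel `(p,q)` strictly after `e`. -/
def revB {P Lab : Type} (M : MSC P Lab) (B : ℕ) (f g : ℕ) : Prop :=
  ∃ e, M.msg e f ∧ isSendOn M (M.loc e) (M.loc f) g ∧ M.procLt e g ∧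
    Set.ncard {g' | isSendOn M (M.loc e) (M.loc f) g' ∧ M.procLt e g' ∧ M.procLe g' g} = B

/-- `≤_B = (≤ ∪ rev_B)*`. -/
def leB {P Lab : Type} (M : MSC P Lab) (B : ℕ) : ℕ → ℕ → Prop :=
  Relation.ReflTransGen (fun a b => (M.proc a b ∨ M.msg a b) ∨ revB M B a b)

/-- `<_B`, the strict part of `≤_B`. -/
def ltB {P Lab : Type} (M : MSC P Lab) (B : ℕ) (e f : ℕ) : Prop :=
  leB M B e f ∧ ¬ leB M B f e

/-- `e ∥_B f` : incomparable w.r.t. `≤_B`. -/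
def parB {P Lab : Type} (M : MSC P Lab) (B : ℕ) (e f : ℕ) : Prop :=
  ¬ leB M B e f ∧ ¬ leB M B f e

/-- `↑_B e = {g : e ≤_B g}`. -/
def upB {P Lab : Type} (M : MSC P Lab) (B : ℕ) (e : ℕ) : Set ℕ :=
  {g | leB M B e g}

/-- The order `≺_B` (w.r.t. a fixed total order on `P`): `e ≺_B f` iff `e <_B f`, or
`e ∥_B f` and the `⊑`-minimum of `loc(↑_B e \ ↑_B f)` is strictly below the
`⊑`-minimum of `loc(↑_B f \ ↑_B e)`. -/
def precB {P Lab : Type} [LinearOrder P] (M : MSC P Lab) (B : ℕ) (e f : ℕ) : Prop :=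
  ltB M B e f ∨
    (parB M B e f ∧ ∃ p ∈ M.loc '' (upB M B e \ upB M B f),
      ∀ q ∈ M.loc '' (upB M B f \ upB M B e), p < q)

/-! The cut vector of an event `e` counts, for each process, the events of that process in
`↑_B e`. These up-sets are nested on each process, so `loc (↑_B e \ ↑_B f)` is exactly the set of
processes where the cut vector of `e` exceeds that of `f`. Hence `e ≺_B f` says that the cut
vector of `f` is lexicographically below that of `e`, and the reflexive closure of `≺_B` is a
linear order as soon as cut vectors separate events, i.e. as soon as `≤_B` is antisymmetric.
This holds because every `B`-bounded linearization contains `rev_B`: by FIFO, otherwise `B + 1`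
messages would be in transit. Conversely, a linearization containing `rev_B` is `B`-bounded: if
`B + 1` messages of a channel were in transit, the receive of the earliest one would come
`rev_B`-before the `B`-th later send (for `B = 0`, an `∃0`-bounded MSC has no messages at all). -/

open Relation Finset

theorem Finsupp.toLex_lt_toLex_iff_exists_forall_lt {α N : Type*} [LinearOrder α] [Zero N]
    [LinearOrder N] {x y : α →₀ N} :
    toLex x < toLex y ↔ ∃ i, x i < y i ∧ ∀ j, y j < x j → i < j := by
  classical
  constructor
  · rintro ⟨i, hbefore, hi⟩
    refine ⟨i, hi, fun j hj => lt_of_not_ge fun hji => ?_⟩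
    rcases hji.lt_or_eq with hji | rfl
    · exact hj.ne' (hbefore j hji)
    · exact lt_asymm hi hj
  · rintro ⟨i, hi, hfirst⟩
    have hne : (x.neLocus y).Nonempty := ⟨i, Finsupp.mem_neLocus.2 hi.ne⟩
    refine ⟨(x.neLocus y).min' hne, fun j hj => ?_, ?_⟩
    · by_contra h
      exact (min'_le _ j (Finsupp.mem_neLocus.2 h)).not_gt hj
    · refine (Finsupp.mem_neLocus.1 (min'_mem _ hne)).lt_or_gt.resolve_right fun h => ?_
      exact (min'_le _ i (Finsupp.mem_neLocus.2 hi.ne)).not_gt (hfirst _ h)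

section Chain

variable {α : Type*} {r : α → α → Prop} [IsPartialOrder α r] [DecidableRel r] {s : Finset α}

theorem IsChain.exists_card_filter_rel_eq (hs : IsChain r (s : Set α)) {k : ℕ} (hk₀ : 0 < k)
    (hk : k ≤ #s) : ∃ t ∈ s, #{x ∈ s | r x t} = k := by
  have hmaps : Set.MapsTo (fun t => #{x ∈ s | r x t}) s (Icc 1 #s) := fun t ht =>
    mem_Icc.2 ⟨card_pos.2 ⟨t, mem_filter.2 ⟨ht, refl t⟩⟩, card_filter_le _ _⟩
  have hinj : Set.InjOn (fun t => #{x ∈ s | r x t}) s := by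
    intro t ht t' ht' hcard
    have below_mono : ∀ {a b}, r a b → {x ∈ s | r x a} ⊆ {x ∈ s | r x b} := fun hab x hx =>
      mem_filter.2 ⟨(mem_filter.1 hx).1, _root_.trans (mem_filter.1 hx).2 hab⟩
    rcases eq_or_ne t t' with rfl | hne
    · rfl
    rcases hs ht ht' hne with h | h
    · have heq := eq_of_subset_of_card_le (below_mono h) hcard.ge
      exact antisymm h (mem_filter.1 (heq.ge (mem_filter.2 ⟨ht', refl t'⟩))).2
    · have heq := eq_of_subset_of_card_le (below_mono h) hcard.le
      exact antisymm (mem_filter.1 (heq.ge (mem_filter.2 ⟨ht, refl t⟩))).2 h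
  obtain ⟨t, ht, hkt⟩ := surjOn_of_injOn_of_card_le _ hmaps hinj (by simp)
    (mem_Icc.2 ⟨hk₀, hk⟩ : k ∈ Icc 1 #s)
  exact ⟨t, ht, hkt⟩

theorem IsChain.exists_forall_rel (hs : IsChain r (s : Set α)) (hne : s.Nonempty) :
    ∃ t ∈ s, ∀ x ∈ s, r t x := by
  obtain ⟨t, ht, hcard⟩ := hs.exists_card_filter_rel_eq one_pos (card_pos.2 hne)
  refine ⟨t, ht, fun x hx => ?_⟩
  rcases eq_or_ne x t with rfl | hxt
  · exact refl x
  refine (hs hx ht hxt).resolve_left fun hx_below => hxt ?_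
  obtain ⟨a, ha⟩ := card_eq_one.1 hcard
  have mem_below : ∀ y ∈ s, r y t → y = a := fun y hy hyt =>
    mem_singleton.1 (ha ▸ mem_filter.2 ⟨hy, hyt⟩)
  rw [mem_below x hx hx_below, mem_below t ht (refl t)]

end Chain

namespace MSC

variable {P Lab : Type} (M : MSC P Lab) {B : ℕ} {e f g : ℕ}

theorem procLt_irrefl (e : ℕ) : ¬ M.procLt e e := fun h =>
  M.acyclic e (TransGen.mono (fun _ _ h => Or.inl h) _ _ h)

instance : IsPartialOrder ℕ M.procLe where
  refl _ := ReflTransGen.refl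
  trans _ _ _ := ReflTransGen.trans
  antisymm e f hef hfe := by
    rcases reflTransGen_iff_eq_or_transGen.1 hef with rfl | hef
    · rfl
    rcases reflTransGen_iff_eq_or_transGen.1 hfe with rfl | hfe
    · rfl
    exact (M.procLt_irrefl e (hef.trans hfe)).elim

variable {M}

theorem hb_of_procLe (h : M.procLe e f) : M.hb e f :=
  ReflTransGen.mono (fun _ _ h => Or.inl h) _ _ h

theorem leB_of_hb (h : M.hb e f) : leB M B e f :=
  ReflTransGen.mono (fun _ _ h => Or.inl h) _ _ h

theorem mem_E_of_isSendOn {p q : P} (h : isSendOn M p q g) : g ∈ M.E :=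
  let ⟨_, _, hmsg, _⟩ := h
  (M.msg_mem _ _ hmsg).1

theorem mem_E_of_leB (he : e ∈ M.E) (h : leB M B e f) : f ∈ M.E := by
  induction h with
  | refl => exact he
  | tail _ hstep _ =>
    rcases hstep with (hproc | hmsg) | ⟨_, _, hsend, _⟩
    · exact (M.proc_mem _ _ hproc).2
    · exact (M.msg_mem _ _ hmsg).2
    · exact mem_E_of_isSendOn hsend

theorem procLe_total_of_loc_eq (he : e ∈ M.E) (hf : f ∈ M.E) (hloc : M.loc e = M.loc f) :
    M.procLe e f ∨ M.procLe f e := by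
  rcases M.proc_total e f he hf hloc with rfl | h | h
  · exact Or.inl ReflTransGen.refl
  · exact Or.inl h.to_reflTransGen
  · exact Or.inr h.to_reflTransGen

theorem isChain_procLe {s : Set ℕ} {p : P} (hE : s ⊆ M.E) (hloc : ∀ x ∈ s, M.loc x = p) :
    IsChain M.procLe s := fun x hx y hy _ =>
  procLe_total_of_loc_eq (hE hx) (hE hy) ((hloc x hx).trans (hloc y hy).symm)

theorem upB_subset_upB (h : leB M B e f) : upB M B f ⊆ upB M B e :=
  fun _ hx => h.trans hx

section Cut

open Classical in
noncomputable def upOn (M : MSC P Lab) (B e : ℕ) (p : P) : Finset ℕ :=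
  {x ∈ M.E | M.loc x = p ∧ leB M B e x}

theorem mem_upOn {x : ℕ} {p : P} : x ∈ M.upOn B e p ↔ x ∈ M.E ∧ M.loc x = p ∧ leB M B e x := by
  simp [upOn]

theorem upOn_subset_or_subset (p : P) :
    M.upOn B e p ⊆ M.upOn B f p ∨ M.upOn B f p ⊆ M.upOn B e p := by
  by_contra! ⟨hef, hfe⟩
  obtain ⟨x, hxe, hxf⟩ := not_subset.1 hef
  obtain ⟨y, hyf, hye⟩ := not_subset.1 hfe
  rw [mem_upOn] at hxe hxf hyf hye
  rcases procLe_total_of_loc_eq hxe.1 hyf.1 (hxe.2.1.trans hyf.2.1.symm) with hxy | hyx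
  · exact hye ⟨hyf.1, hyf.2.1, hxe.2.2.trans (leB_of_hb (hb_of_procLe hxy))⟩
  · exact hxf ⟨hxe.1, hxe.2.1, hyf.2.2.trans (leB_of_hb (hb_of_procLe hyx))⟩

noncomputable def cut (M : MSC P Lab) (B e : ℕ) : P →₀ ℕ := by
  classical
  exact Finsupp.onFinset (M.E.image M.loc) (fun p => #(M.upOn B e p)) fun p hp => by
    obtain ⟨x, hx⟩ := card_ne_zero.1 hp
    exact mem_image.2 ⟨x, (mem_upOn.1 hx).1, (mem_upOn.1 hx).2.1⟩

theorem cut_apply (p : P) : M.cut B e p = #(M.upOn B e p) := by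
  unfold cut
  exact Finsupp.onFinset_apply

theorem cut_lt_cut_iff (he : e ∈ M.E) {p : P} :
    M.cut B f p < M.cut B e p ↔ p ∈ M.loc '' (upB M B e \ upB M B f) := by
  rw [cut_apply, cut_apply]
  constructor
  · intro hlt
    obtain ⟨x, hxe, hxf⟩ := not_subset.1 fun h => (card_le_card h).not_gt hlt
    rw [mem_upOn] at hxe hxf
    exact ⟨x, ⟨hxe.2.2, fun hfx => hxf ⟨hxe.1, hxe.2.1, hfx⟩⟩, hxe.2.1⟩
  · rintro ⟨x, ⟨hex, hfx⟩, rfl⟩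
    have hxe : x ∈ M.upOn B e (M.loc x) := mem_upOn.2 ⟨mem_E_of_leB he hex, rfl, hex⟩
    have hxf : x ∉ M.upOn B f (M.loc x) := fun h => hfx (mem_upOn.1 h).2.2
    refine card_lt_card ⟨?_, fun h => hxf (h hxe)⟩
    exact (upOn_subset_or_subset _).resolve_left fun h => hxf (h hxe)

end Cut

section Linearization

variable {r : ℕ → ℕ → Prop}

def pending (M : MSC P Lab) (r : ℕ → ℕ → Prop) (g : ℕ) (p q : P) : Set (ℕ × ℕ) :=
  {ef | M.msg ef.1 ef.2 ∧ M.loc ef.1 = p ∧ M.loc ef.2 = q ∧ r ef.1 g ∧ ¬ r ef.2 g}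

theorem _root_.isBBoundedLin_iff_pending : IsBBoundedLin M r B ↔
    IsLinearization M r ∧ ∀ g ∈ M.E, ∀ p q, p ≠ q → (M.pending r g p q).ncard ≤ B :=
  Iff.rfl

theorem pending_finite {p q : P} : (M.pending r g p q).Finite :=
  (M.E.finite_toSet.prod M.E.finite_toSet).subset fun _ h => M.msg_mem _ _ h.1

theorem _root_.IsBBoundedLin.rel_of_revB (hr : IsBBoundedLin M r B) (h : revB M B f g) :
    r f g := by
  obtain ⟨⟨-, -, htrans, -, hhb⟩, hbound⟩ := isBBoundedLin_iff_pending.1 hr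
  obtain ⟨e, hef, hsend, heg, hcount⟩ := h
  set K := {g' | isSendOn M (M.loc e) (M.loc f) g' ∧ M.procLt e g' ∧ M.procLe g' g}
  have he := (M.msg_mem _ _ hef).1
  have hf := (M.msg_mem _ _ hef).2
  have hg := mem_E_of_isSendOn hsend
  by_contra hfg
  -- by FIFO, each message sent in `(e, g]` is received after `f`, so it is still in transit
  have hsub : insert e K ⊆ Prod.fst '' M.pending r g (M.loc e) (M.loc f) := by
    rintro x (rfl | ⟨⟨hxloc, y, hxy, hyloc⟩, hex, hxg⟩)
    · exact ⟨(x, f), ⟨hef, rfl, rfl, hhb x he g hg (hb_of_procLe heg.to_reflTransGen), hfg⟩, rfl⟩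
    · have hx := (M.msg_mem _ _ hxy).1
      have hy := (M.msg_mem _ _ hxy).2
      have hfy : M.procLe f y :=
        (M.fifo e f x y hef hxy hxloc.symm hyloc.symm).1 hex.to_reflTransGen
      refine ⟨(x, y), ⟨hxy, hxloc, hyloc, hhb x hx g hg (hb_of_procLe hxg), fun hyg => hfg ?_⟩, rfl⟩
      exact htrans f hf y hy g hg (hhb f hf y hy (hb_of_procLe hfy)) hyg
  have hK : K.Finite := M.E.finite_toSet.subset fun _ hx => mem_E_of_isSendOn hx.1
  have heK : e ∉ K := fun h => M.procLt_irrefl e h.2.1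
  have : B + 1 ≤ B := calc
    B + 1 = (insert e K).ncard := by rw [Set.ncard_insert_of_notMem heK hK, hcount]
    _ ≤ (Prod.fst '' M.pending r g _ _).ncard := Set.ncard_le_ncard hsub (pending_finite.image _)
    _ ≤ (M.pending r g _ _).ncard := Set.ncard_image_le pending_finite
    _ ≤ B := hbound g hg _ _ (M.msg_loc e f hef)
  omega

theorem _root_.IsLinearization.rel_of_leB (hr : IsLinearization M r)
    (hrev : ∀ f g, revB M B f g → r f g) (he : e ∈ M.E) (h : leB M B e f) : r e f := by
  obtain ⟨hrefl, -, htrans, -, hhb⟩ := hr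
  induction h with
  | refl => exact hrefl e he
  | @tail b c heb hstep ih =>
    have hb := mem_E_of_leB he heb
    have hc := mem_E_of_leB he (heb.tail hstep)
    refine htrans e he b hb c hc ih ?_
    rcases hstep with hstep | hstep
    · exact hhb b hb c hc (ReflTransGen.single hstep)
    · exact hrev b c hstep

theorem leB_antisymm (hM : ExistsBBounded M B) (he : e ∈ M.E) (hef : leB M B e f)
    (hfe : leB M B f e) : e = f := by
  obtain ⟨r, hr⟩ := hM
  have hf := mem_E_of_leB he hef
  have hrev : ∀ f g, revB M B f g → r f g := fun _ _ => hr.rel_of_revB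
  exact hr.1.2.1 e he f hf (hr.1.rel_of_leB hrev he hef) (hr.1.rel_of_leB hrev hf hfe)

theorem not_msg_of_existsBBounded_zero (hM : ExistsBBounded M 0) : ¬ M.msg e f := by
  intro hef
  obtain ⟨r, hr⟩ := hM
  obtain ⟨⟨hrefl, hanti, -, -, hhb⟩, hbound⟩ := isBBoundedLin_iff_pending.1 hr
  have he := (M.msg_mem _ _ hef).1
  have hf := (M.msg_mem _ _ hef).2
  have hpend : (e, f) ∈ M.pending r e (M.loc e) (M.loc f) := by
    refine ⟨hef, rfl, rfl, hrefl e he, fun hfe => M.msg_loc e f hef ?_⟩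
    rw [hanti e he f hf (hhb e he f hf (ReflTransGen.single (Or.inr hef))) hfe]
  have := (Set.ncard_pos pending_finite).2 ⟨_, hpend⟩
  have := hbound e he _ _ (M.msg_loc e f hef)
  omega

theorem exists_revB_of_lt_card (hB : 0 < B) (hef : M.msg e f) {T : Finset ℕ}
    (hT : ∀ x ∈ T, isSendOn M (M.loc e) (M.loc f) x) (heT : e ∈ T)
    (hmin : ∀ x ∈ T, M.procLe e x) (hcard : B < #T) :
    ∃ g, ∃ t ∈ T, revB M B f g ∧ M.procLe g t := by
  classical
  set V : Finset ℕ :=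
    {x ∈ M.E | isSendOn M (M.loc e) (M.loc f) x ∧ M.procLt e x ∧ ∃ t ∈ T, M.procLe x t}
  have hTV : T.erase e ⊆ V := fun x hx => by
    obtain ⟨hxe, hxT⟩ := mem_erase.1 hx
    refine mem_filter.2 ⟨mem_E_of_isSendOn (hT x hxT), hT x hxT, ?_, x, hxT, refl x⟩
    exact (reflTransGen_iff_eq_or_transGen.1 (hmin x hxT)).resolve_left hxe
  have hV : IsChain M.procLe (V : Set ℕ) :=
    isChain_procLe (fun x hx => (mem_filter.1 hx).1) fun x hx => (mem_filter.1 hx).2.1.1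
  have hBV : B ≤ #V := by
    have := card_le_card hTV
    rw [card_erase_of_mem heT] at this
    omega
  obtain ⟨g, hgV, hgcount⟩ := hV.exists_card_filter_rel_eq hB hBV
  obtain ⟨-, hgsend, heg, t, htT, hgt⟩ := mem_filter.1 hgV
  refine ⟨g, t, htT, ⟨e, hef, hgsend, heg, ?_⟩, hgt⟩
  have hsends : {g' | isSendOn M (M.loc e) (M.loc f) g' ∧ M.procLt e g' ∧ M.procLe g' g} =
      ↑({x ∈ V | M.procLe x g}) := by
    ext x
    simp only [coe_filter, mem_filter, Set.mem_ofPred_eq, V]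
    constructor
    · rintro ⟨hs, hex, hxg⟩
      exact ⟨⟨mem_E_of_isSendOn hs, hs, hex, t, htT, _root_.trans hxg hgt⟩, hxg⟩
    · rintro ⟨⟨-, hs, hex, -⟩, hxg⟩
      exact ⟨hs, hex, hxg⟩
  rw [hsends, Set.ncard_coe_finset, hgcount]

theorem _root_.IsLinearization.isBBoundedLin_of_revB (hB : 0 < B) (hr : IsLinearization M r)
    (hrev : ∀ f g, revB M B f g → r f g) : IsBBoundedLin M r B := by
  classical
  refine isBBoundedLin_iff_pending.2 ⟨hr, fun g hg p q _ => ?_⟩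
  obtain ⟨-, -, htrans, -, hhb⟩ := hr
  by_contra! hlt
  have hS : (M.pending r g p q).Finite := pending_finite
  set T := hS.toFinset.image Prod.fst
  have hinj : Set.InjOn Prod.fst (hS.toFinset : Set (ℕ × ℕ)) := fun a ha b hb hab => by
    rw [Set.Finite.coe_toFinset] at ha hb
    exact Prod.ext hab (M.msg_once _ _ _ _ ha.1 hb.1 (Or.inl hab)).2
  have hTcard : B < #T := by
    rwa [card_image_of_injOn hinj, ← Set.ncard_eq_toFinset_card _ hS]
  have hT : ∀ x ∈ T, isSendOn M p q x ∧ r x g := fun x hx => by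
    obtain ⟨⟨_, y⟩, hxy, rfl⟩ := mem_image.1 hx
    obtain ⟨hmsg, hp, hq, hxg, -⟩ := hS.mem_toFinset.1 hxy
    exact ⟨⟨hp, y, hmsg, hq⟩, hxg⟩
  have hTchain : IsChain M.procLe (T : Set ℕ) :=
    isChain_procLe (fun x hx => mem_E_of_isSendOn (hT x hx).1) fun x hx => (hT x hx).1.1
  obtain ⟨e, heT, hmin⟩ := hTchain.exists_forall_rel (card_pos.1 (by omega))
  obtain ⟨⟨_, f⟩, hef, rfl⟩ := mem_image.1 heT
  obtain ⟨hmsg, rfl, rfl, -, hfg⟩ := hS.mem_toFinset.1 hef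
  obtain ⟨g₁, t, htT, hrev₁, hg₁t⟩ :=
    exists_revB_of_lt_card hB hmsg (fun x hx => (hT x hx).1) heT hmin hTcard
  have hf := (M.msg_mem _ _ hmsg).2
  have ht := mem_E_of_isSendOn (hT t htT).1
  have hg₁ : g₁ ∈ M.E := by
    obtain ⟨_, _, hsend, _⟩ := hrev₁
    exact mem_E_of_isSendOn hsend
  refine hfg (htrans f hf g₁ hg₁ g hg (hrev _ _ hrev₁) ?_)
  exact htrans g₁ hg₁ t ht g hg (hhb g₁ hg₁ t ht (hb_of_procLe hg₁t)) (hT t htT).2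

theorem _root_.IsLinearization.isBBoundedLin_of_leB (hM : ExistsBBounded M B)
    (hr : IsLinearization M r) (hle : ∀ e ∈ M.E, ∀ f, leB M B e f → r e f) :
    IsBBoundedLin M r B := by
  rcases Nat.eq_zero_or_pos B with rfl | hB
  · refine isBBoundedLin_iff_pending.2 ⟨hr, fun g _ p q _ => ?_⟩
    rw [(Set.ncard_eq_zero pending_finite).2
      (Set.eq_empty_of_forall_notMem fun _ h => not_msg_of_existsBBounded_zero hM h.1)]
  · refine hr.isBBoundedLin_of_revB hB fun f g h => hle f ?_ g (ReflTransGen.single (Or.inr h))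
    obtain ⟨_, hef, _⟩ := h
    exact (M.msg_mem _ _ hef).2

end Linearization

theorem cut_injOn (hM : ExistsBBounded M B) : Set.InjOn (M.cut B) M.E := by
  have leB_of_cut_eq : ∀ {a b}, a ∈ M.E → M.cut B a = M.cut B b → leB M B b a :=
    fun ha hab => by_contra fun hba => by
      have := (cut_lt_cut_iff ha).2 ⟨_, ⟨ReflTransGen.refl, hba⟩, rfl⟩
      rw [hab] at this
      exact lt_irrefl _ this
  exact fun e he f hf hef => leB_antisymm hM he (leB_of_cut_eq hf hef.symm) (leB_of_cut_eq he hef)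

theorem cut_le_cut_of_leB (hf : f ∈ M.E) (h : leB M B e f) : M.cut B f ≤ M.cut B e :=
  fun _ => not_lt.1 fun hlt => by
    obtain ⟨_, ⟨hfx, hex⟩, _⟩ := (cut_lt_cut_iff hf).1 hlt
    exact hex (h.trans hfx)

section Order

variable [LinearOrder P]

theorem precB_iff_exists_forall_lt :
    precB M B e f ↔ ∃ p ∈ M.loc '' (upB M B e \ upB M B f),
      ∀ q ∈ M.loc '' (upB M B f \ upB M B e), p < q := by
  constructor
  · rintro (⟨hef, hfe⟩ | ⟨-, h⟩)
    · refine ⟨M.loc e, ⟨e, ⟨ReflTransGen.refl, hfe⟩, rfl⟩, ?_⟩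
      rintro _ ⟨x, ⟨hfx, hex⟩, rfl⟩
      exact (hex (upB_subset_upB hef hfx)).elim
    · exact h
  · rintro h
    obtain ⟨_, ⟨x, ⟨hex, hfx⟩, -⟩, -⟩ := id h
    have hfe : ¬ leB M B f e := fun hfe => hfx (upB_subset_upB hfe hex)
    by_cases hef : leB M B e f
    · exact Or.inl ⟨hef, hfe⟩
    · exact Or.inr ⟨⟨hef, hfe⟩, h⟩

theorem precB_iff_toLex_cut_lt (he : e ∈ M.E) (hf : f ∈ M.E) :
    precB M B e f ↔ toLex (M.cut B f) < toLex (M.cut B e) := by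
  simp only [precB_iff_exists_forall_lt, Finsupp.toLex_lt_toLex_iff_exists_forall_lt,
    cut_lt_cut_iff he, cut_lt_cut_iff hf]

theorem eq_or_precB_iff_toLex_cut_le (hM : ExistsBBounded M B) (he : e ∈ M.E) (hf : f ∈ M.E) :
    (e = f ∨ precB M B e f) ↔ toLex (M.cut B f) ≤ toLex (M.cut B e) := by
  rw [precB_iff_toLex_cut_lt he hf, le_iff_eq_or_lt, toLex_inj, (cut_injOn hM).eq_iff hf he,
    eq_comm]

theorem eq_or_precB_of_leB (hM : ExistsBBounded M B) (he : e ∈ M.E) (h : leB M B e f) :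
    e = f ∨ precB M B e f := by
  have hf := mem_E_of_leB he h
  exact (eq_or_precB_iff_toLex_cut_le hM he hf).2 (Finsupp.toLex_monotone (cut_le_cut_of_leB hf h))

theorem isLinearization_precB (hM : ExistsBBounded M B) :
    IsLinearization M (fun e f => e = f ∨ precB M B e f) := by
  have key {e f : ℕ} := eq_or_precB_iff_toLex_cut_le (e := e) (f := f) hM
  refine ⟨fun _ _ => Or.inl rfl, fun e he f hf hef hfe => ?_, fun e he f hf g hg hef hfg => ?_,
    fun e he f hf => ?_, fun e he f _ h => eq_or_precB_of_leB hM he (leB_of_hb h)⟩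
  · exact cut_injOn hM he hf (toLex_inj.1 (le_antisymm ((key hf he).1 hfe) ((key he hf).1 hef)))
  · exact (key he hg).2 (((key hf hg).1 hfg).trans ((key he hf).1 hef))
  · exact (le_total _ _).imp (key he hf).2 (key hf he).2

end Order

end MSC

/-- For an `∃B`-bounded MSC `M`, the reflexive closure `⪯_B`
of `≺_B` contains `≤_B` (in particular the happened-before relation `≤`), and
it is a `B`-bounded linearization of `M`. -/
theorem precB_refl_closure_bounded_linearization {P Lab : Type}
    [Fintype P] [Nonempty P] [LinearOrder P] [Fintype Lab] [Nonempty Lab]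
    (B : ℕ) (M : MSC P Lab) (hM : ExistsBBounded M B) :
    (∀ e ∈ M.E, ∀ f ∈ M.E, leB M B e f → (e = f ∨ precB M B e f)) ∧
    (∀ e ∈ M.E, ∀ f ∈ M.E, M.hb e f → (e = f ∨ precB M B e f)) ∧
    IsBBoundedLin M (fun e f => e = f ∨ precB M B e f) B := by
  have hle : ∀ e ∈ M.E, ∀ f, leB M B e f → e = f ∨ precB M B e f :=
    fun e he _ => MSC.eq_or_precB_of_leB hM he
  exact ⟨fun e he f _ => hle e he f, fun e he f _ h => hle e he f (MSC.leB_of_hb h),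
    (MSC.isLinearization_precB hM).isBBoundedLin_of_leB hM hle⟩
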